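/- Let X, Y be Banach spaces and u : [0,∞) → L(X;Y). If for every x ∈ X there exists t_x ≥ 0 such that the orbit t ↦ u(t)x is differentiable on (t_x,∞), then there exists t₀ ≥ 0 such that for every x ∈ X the orbit t ↦ u(t)x is differentiable on (t₀,∞). -/

import Mathlib

/-! For each `t` the vectors with orbit differentiable at `t` form a subspace `S t`. It is Baire
measurable: differentiability at `t` is the Cauchy property of the difference quotients along
`𝓝[≠] t`, a countable intersection of countable unions of closed sets, because each single
difference quotient depends continuously on `x` (no continuity of `u` in `t` enters). By Pettis'
theorem a Baire measurable subspace that is not meagre is open, hence everything. If no uniform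
`t₀` existed, we could pick `tₙ > n` with `S tₙ` proper, hence meagre; but the `S tₙ` cover `X`,
contradicting Baire's theorem. -/

open Filter Topology Set

/-- Pettis: for `v` near `0`, `S ∩ (S - v)` is residually equal to the open set `U ∩ (U - v)`,
which contains `x₀`; so it is nonempty and `v ∈ S - S = S`. -/
theorem AddSubgroup.isOpen_of_baireMeasurableSet_of_not_isMeagre {G : Type*} [AddGroup G]
    [TopologicalSpace G] [IsTopologicalAddGroup G] [BaireSpace G] {S : AddSubgroup G}
    (hS : BaireMeasurableSet (S : Set G)) (hS' : ¬ IsMeagre (S : Set G)) :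
    IsOpen (S : Set G) := by
  obtain ⟨U, hU, hSU⟩ := hS.residualEq_isOpen
  obtain ⟨x₀, hx₀⟩ : U.Nonempty :=
    nonempty_iff_ne_empty.2 fun hU₀ => hS' (eventuallyEq_empty.1 (hU₀ ▸ hSU))
  refine S.isOpen_of_mem_nhds (g := 0) ?_
  have hW : (x₀ + ·) ⁻¹' U ∈ 𝓝 (0 : G) :=
    (continuous_const_add x₀).continuousAt.preimage_mem_nhds (by simpa using hU.mem_nhds hx₀)
  refine mem_of_superset hW fun v hv => ?_
  have hSU_shift : (· + v) ⁻¹' (S : Set G) =ᵇ (· + v) ⁻¹' U :=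
    (tendsto_residual_of_isOpenMap (continuous_add_const v) (isOpenMap_add_right v)).eventually hSU
  obtain ⟨w, hwS, hwvS⟩ : ((S : Set G) ∩ (· + v) ⁻¹' S).Nonempty := by
    refine nonempty_iff_ne_empty.2 fun h₀ => not_isMeagre_of_isOpen
      (hU.inter (hU.preimage (continuous_add_const v))) ⟨x₀, hx₀, hv⟩ ?_
    exact eventuallyEq_empty.1 (h₀ ▸ (hSU.inter hSU_shift)).symm
  simpa using S.add_mem (S.neg_mem hwS) hwvS

theorem Submodule.isMeagre_of_baireMeasurableSet_of_ne_top {R M : Type*} [Ring R]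
    [TopologicalSpace R] [NeBot (𝓝[{x : R | IsUnit x}] 0)] [AddCommGroup M] [TopologicalSpace M]
    [IsTopologicalAddGroup M] [Module R M] [ContinuousSMul R M] [BaireSpace M]
    {S : Submodule R M} (hS : BaireMeasurableSet (S : Set M)) (hS_ne : S ≠ ⊤) :
    IsMeagre (S : Set M) := by
  by_contra hS'
  have hopen : IsOpen (S : Set M) := AddSubgroup.isOpen_of_baireMeasurableSet_of_not_isMeagre
    (S := S.toAddSubgroup) hS hS'
  exact hS_ne (S.eq_top_of_nonempty_interior' ⟨0, by rw [hopen.interior_eq]; exact S.zero_mem⟩)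

theorem Submodule.exists_eq_top_of_iUnion_eq_univ {R M ι : Type*} [Ring R]
    [TopologicalSpace R] [NeBot (𝓝[{x : R | IsUnit x}] 0)] [AddCommGroup M] [TopologicalSpace M]
    [IsTopologicalAddGroup M] [Module R M] [ContinuousSMul R M] [BaireSpace M] [Countable ι]
    {S : ι → Submodule R M} (hS : ∀ i, BaireMeasurableSet (S i : Set M))
    (hcover : ⋃ i, (S i : Set M) = univ) : ∃ i, S i = ⊤ := by
  by_contra! hS_ne
  have hmeagre := isMeagre_iUnion fun i =>
    Submodule.isMeagre_of_baireMeasurableSet_of_ne_top (hS i) (hS_ne i)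
  exact not_isMeagre_of_isOpen isOpen_univ univ_nonempty (hcover ▸ hmeagre)

theorem baireMeasurableSet_setOf_exists_tendsto {X ι Y : Type*} [TopologicalSpace X]
    [PseudoMetricSpace Y] [CompleteSpace Y] {l : Filter ι} [l.NeBot] [l.IsCountablyGenerated]
    {F : X → ι → Y} (hF : ∀ i, Continuous fun x => F x i) :
    BaireMeasurableSet {x | ∃ c, Tendsto (F x) l (𝓝 c)} := by
  obtain ⟨s, hs⟩ := l.exists_antitone_basis
  let C (m j : ℕ) : Set X := {x | ∀ p ∈ s j ×ˢ s j, dist (F x p.1) (F x p.2) ≤ 1 / (m + 1)}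
  have hC : {x | ∃ c, Tendsto (F x) l (𝓝 c)} = ⋂ m, ⋃ j, C m j := by
    ext x
    rw [mem_ofPred_eq, ← cauchy_map_iff_exists_tendsto, cauchy_map_iff',
      hs.toHasBasis.prod_self.tendsto_iff Metric.uniformity_basis_dist_le_inv_nat_succ]
    simp only [true_implies, true_and, mem_iInter, mem_iUnion]
    rfl
  have hC_closed (m j : ℕ) : IsClosed (C m j) := by
    simp only [C, ofPred_forall]
    exact isClosed_biInter fun p _ => isClosed_le ((hF p.1).dist (hF p.2)) continuous_const
  rw [hC]
  exact .iInter fun m => .iUnion fun j => (hC_closed m j).isOpen_compl.baireMeasurableSet.of_compl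

section Orbit

variable {𝕜 X Y : Type*} [NontriviallyNormedField 𝕜] [AddCommGroup X] [TopologicalSpace X]
  [Module 𝕜 X] [NormedAddCommGroup Y] [NormedSpace 𝕜 Y]

def differentiableOrbitSubmodule (u : 𝕜 → X →L[𝕜] Y) (t : 𝕜) : Submodule 𝕜 X where
  carrier := {x | DifferentiableAt 𝕜 (fun s => u s x) t}
  zero_mem' := by simp
  add_mem' {a b} ha hb := by simpa using ha.fun_add hb
  smul_mem' c a ha := by simpa using ha.fun_const_smul c

theorem mem_differentiableOrbitSubmodule {u : 𝕜 → X →L[𝕜] Y} {t : 𝕜} {x : X} :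
    x ∈ differentiableOrbitSubmodule u t ↔ DifferentiableAt 𝕜 (fun s => u s x) t :=
  Iff.rfl

theorem baireMeasurableSet_differentiableOrbitSubmodule [CompleteSpace Y]
    (u : 𝕜 → X →L[𝕜] Y) (t : 𝕜) :
    BaireMeasurableSet (differentiableOrbitSubmodule u t : Set X) := by
  have hslope : (differentiableOrbitSubmodule u t : Set X) =
      {x | ∃ c, Tendsto (slope (fun s => u s x) t) (𝓝[≠] t) (𝓝 c)} := by
    ext x
    simp only [SetLike.mem_coe, mem_differentiableOrbitSubmodule, mem_ofPred_eq,
      ← hasDerivAt_iff_tendsto_slope]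
    exact ⟨fun h => ⟨_, h.hasDerivAt⟩, fun ⟨_, h⟩ => h.differentiableAt⟩
  rw [hslope]
  refine baireMeasurableSet_setOf_exists_tendsto fun h => ?_
  simp only [slope_def_module]
  fun_prop

end Orbit

/-- Individually eventually differentiable implies uniformly eventually
differentiable (generalized Iley–Bárta theorem). -/
theorem eventually_differentiable_individual_implies_uniform
    {X Y : Type*} [NormedAddCommGroup X] [NormedSpace ℝ X] [CompleteSpace X]
    [NormedAddCommGroup Y] [NormedSpace ℝ Y] [CompleteSpace Y]
    (u : ℝ → X →L[ℝ] Y)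
    (h : ∀ x : X, ∃ tx : ℝ, 0 ≤ tx ∧ ∀ t : ℝ, tx < t →
      DifferentiableAt ℝ (fun s : ℝ => u s x) t) :
    ∃ t₀ : ℝ, 0 ≤ t₀ ∧ ∀ x : X, ∀ t : ℝ, t₀ < t →
      DifferentiableAt ℝ (fun s : ℝ => u s x) t := by
  by_contra! hbad
  choose x t ht hx using fun n : ℕ => hbad n n.cast_nonneg
  have hcover : ⋃ n, (differentiableOrbitSubmodule u (t n) : Set X) = univ := by
    refine eq_univ_of_forall fun y => mem_iUnion.2 ?_
    obtain ⟨ty, -, hy⟩ := h y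
    obtain ⟨n, hn⟩ := exists_nat_gt ty
    exact ⟨n, hy _ (hn.trans (ht n))⟩
  obtain ⟨n, hn⟩ := Submodule.exists_eq_top_of_iUnion_eq_univ
    (fun n => baireMeasurableSet_differentiableOrbitSubmodule u (t n)) hcover
  exact hx n (mem_differentiableOrbitSubmodule.1 (hn ▸ Submodule.mem_top))
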